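/- arXiv:2106.03700 — 2 statements merged into one kernel-verified Lean document; each statement's English description precedes it below -/
import Mathlib

section
/- Fix p ∈ (2, ∞) and for d ∈ ℕ set e_{d,p} := Γ(1 + d/p)^{1/d} / (2·Γ(1 + 1/p)). Then for every d ∈ ℕ, e_{d,2}/e_{d,p} = [Γ(1+d/2)/Γ(1+d/p)]^{1/d} · Γ(1/p + 1)/Γ(3/2) ≥ (d/p)^{1/2 − 1/p} · Γ(1/p + 1)/Γ(3/2); consequently, u_d := (e_{d,2}/e_{d,p}) · d^{1/(2p)} / d^{1/4} → ∞ as d → ∞. -/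
open Filter

lemma gamma_ratio_aux (x t : ℝ) (hx : 0 < x) (ht : 0 < t) :
    Real.Gamma (1 + x) * x ^ t ≤ Real.Gamma (1 + x + t) := by
  have hGx : 0 < Real.Gamma x := Real.Gamma_pos_of_pos hx
  have hG1 : 0 < Real.Gamma (1 + x) := Real.Gamma_pos_of_pos (by linarith)
  have hG2 : 0 < Real.Gamma (1 + x + t) := Real.Gamma_pos_of_pos (by linarith)
  have hslope := Real.convexOn_log_Gamma.slope_mono_adjacent
    (Set.mem_Ioi.mpr hx) (Set.mem_Ioi.mpr (by linarith : (0:ℝ) < 1 + x + t))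
    (by linarith : x < 1 + x) (by linarith : 1 + x < 1 + x + t)
  simp only [Function.comp] at hslope
  have hadd : Real.Gamma (1 + x) = x * Real.Gamma x := by
    rw [add_comm, Real.Gamma_add_one hx.ne']
  have hlogx : Real.log (Real.Gamma (1 + x)) - Real.log (Real.Gamma x) = Real.log x := by
    rw [hadd, Real.log_mul hx.ne' hGx.ne']; ring
  rw [show (1 + x - x : ℝ) = 1 by ring, div_one, hlogx,
    show (1 + x + t - (1 + x) : ℝ) = t by ring, le_div_iff₀ ht] at hslope
  have key : Real.log (Real.Gamma (1 + x)) + t * Real.log x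
      ≤ Real.log (Real.Gamma (1 + x + t)) := by linarith
  have h2 := Real.exp_le_exp.mpr key
  rw [Real.exp_add, Real.exp_log hG1, Real.exp_log hG2] at h2
  rw [Real.rpow_def_of_pos hx, mul_comm (Real.log x) t]
  exact h2

/-- with `e_{d,p} = Γ(1+d/p)^{1/d} / (2 Γ(1+1/p))` and `p ∈ (2,∞)`, the
ratio `e_{d,2}/e_{d,p}` equals `[Γ(1+d/2)/Γ(1+d/p)]^{1/d} Γ(1/p+1)/Γ(3/2)`, is bounded
below by `(d/p)^{1/2-1/p} Γ(1/p+1)/Γ(3/2)`, and consequently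
`u_d = (e_{d,2}/e_{d,p}) d^{1/(2p)}/d^{1/4} → ∞`. -/
theorem stmt12 (p : ℝ) (hp : 2 < p)
    (e : ℕ → ℝ → ℝ)
    (he : ∀ (d : ℕ) (q : ℝ),
      e d q = Real.Gamma (1 + (d : ℝ) / q) ^ ((1 : ℝ) / d) / (2 * Real.Gamma (1 + 1 / q))) :
    (∀ d : ℕ,
      e d 2 / e d p
        = (Real.Gamma (1 + (d : ℝ) / 2) / Real.Gamma (1 + (d : ℝ) / p)) ^ ((1 : ℝ) / d)
            * (Real.Gamma (1 / p + 1) / Real.Gamma (3 / 2)) ∧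
      ((d : ℝ) / p) ^ ((1 : ℝ) / 2 - 1 / p) * (Real.Gamma (1 / p + 1) / Real.Gamma (3 / 2))
        ≤ e d 2 / e d p) ∧
    Tendsto (fun d : ℕ =>
        (e d 2 / e d p) * (d : ℝ) ^ ((1 : ℝ) / (2 * p)) / (d : ℝ) ^ ((1 : ℝ) / 4))
      atTop atTop := by
  have hp0 : 0 < p := by linarith
  have hC : 0 < Real.Gamma (1 / p + 1) / Real.Gamma (3 / 2) := by
    apply div_pos (Real.Gamma_pos_of_pos (by positivity)) (Real.Gamma_pos_of_pos (by norm_num))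
  set C := Real.Gamma (1 / p + 1) / Real.Gamma (3 / 2) with hCdef
  have hmain : ∀ d : ℕ,
      e d 2 / e d p
        = (Real.Gamma (1 + (d : ℝ) / 2) / Real.Gamma (1 + (d : ℝ) / p)) ^ ((1 : ℝ) / d) * C ∧
      ((d : ℝ) / p) ^ ((1 : ℝ) / 2 - 1 / p) * C ≤ e d 2 / e d p := by
    intro d
    have hG2 : 0 < Real.Gamma (1 + (d : ℝ) / 2) := Real.Gamma_pos_of_pos (by positivity)
    have hGp : 0 < Real.Gamma (1 + (d : ℝ) / p) := Real.Gamma_pos_of_pos (by positivity)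
    have h32 : Real.Gamma (1 + 1 / 2) = Real.Gamma (3 / 2) := by norm_num
    have h1p : Real.Gamma (1 + 1 / p) = Real.Gamma (1 / p + 1) := by rw [add_comm]
    have hG32 : 0 < Real.Gamma (3 / 2) := Real.Gamma_pos_of_pos (by norm_num)
    have hG1p : 0 < Real.Gamma (1 / p + 1) := Real.Gamma_pos_of_pos (by positivity)
    have heq : e d 2 / e d p
        = (Real.Gamma (1 + (d : ℝ) / 2) / Real.Gamma (1 + (d : ℝ) / p)) ^ ((1 : ℝ) / d) * C := by
      rw [he d 2, he d p, h32, h1p, Real.div_rpow hG2.le hGp.le]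
      have hGp' : Real.Gamma (1 + (d : ℝ) / p) ^ ((1:ℝ)/d) ≠ 0 := by positivity
      rw [hCdef, div_div_div_eq, div_mul_div_comm,
        div_eq_div_iff (mul_ne_zero (mul_ne_zero two_ne_zero hG32.ne') hGp') (mul_ne_zero hGp' hG32.ne')]
      ring
    refine ⟨heq, ?_⟩
    rw [heq]
    apply mul_le_mul_of_nonneg_right _ hC.le
    rcases Nat.eq_zero_or_pos d with hd | hd
    · subst hd
      simp only [Nat.cast_zero, zero_div]
      have h12 : (1:ℝ)/p < 1/2 := by rw [div_lt_div_iff₀ hp0 two_pos]; linarith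
      rw [Real.zero_rpow (by linarith : ((1:ℝ)/2 - 1/p) ≠ 0)]
      positivity
    · have hd0 : (0:ℝ) < d := by exact_mod_cast hd
      have hxp : 0 < (d:ℝ) / p := by positivity
      have ht : 0 < (d:ℝ) / 2 - (d:ℝ) / p := by
        rw [sub_pos, div_lt_div_iff₀ hp0 two_pos]
        nlinarith
      have hkey := gamma_ratio_aux ((d:ℝ)/p) ((d:ℝ)/2 - (d:ℝ)/p) hxp ht
      rw [show (1 + (d:ℝ)/p + ((d:ℝ)/2 - (d:ℝ)/p)) = 1 + (d:ℝ)/2 by ring] at hkey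
      have hratio : ((d:ℝ)/p) ^ ((d:ℝ)/2 - (d:ℝ)/p)
          ≤ Real.Gamma (1 + (d:ℝ)/2) / Real.Gamma (1 + (d:ℝ)/p) := by
        rw [le_div_iff₀ hGp]
        linarith [hkey]
      have := Real.rpow_le_rpow (by positivity) hratio (by positivity : (0:ℝ) ≤ 1/d)
      have hexp : ((d:ℝ)/2 - (d:ℝ)/p) * (1/(d:ℝ)) = 1/2 - 1/p := by
        field_simp
      rwa [← Real.rpow_mul hxp.le, hexp] at this
  refine ⟨hmain, ?_⟩
  have hα : (0:ℝ) < 1/4 - 1/(2*p) := by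
    have : 1/(2*p) < 1/4 := by rw [div_lt_div_iff₀ (by linarith) (by norm_num)]; linarith
    linarith
  have hK : 0 < C * (1/p) ^ ((1:ℝ)/2 - 1/p) := by positivity
  have hbase : Tendsto (fun d : ℕ => C * (1/p) ^ ((1:ℝ)/2 - 1/p) * (d:ℝ) ^ ((1:ℝ)/4 - 1/(2*p))) atTop atTop := by
    apply Tendsto.const_mul_atTop hK
    exact (tendsto_rpow_atTop hα).comp tendsto_natCast_atTop_atTop
  apply tendsto_atTop_mono' atTop _ hbase
  filter_upwards [eventually_ge_atTop 1] with d hd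
  have hd0 : (0:ℝ) < d := by exact_mod_cast hd
  have hlow := (hmain d).2
  have h14 : (0:ℝ) < (d:ℝ) ^ ((1:ℝ)/4) := Real.rpow_pos_of_pos hd0 _
  have h2p : (0:ℝ) < (d:ℝ) ^ ((1:ℝ)/(2*p)) := Real.rpow_pos_of_pos hd0 _
  have hsplit : ((d:ℝ)/p) ^ ((1:ℝ)/2 - 1/p) = (1/p) ^ ((1:ℝ)/2 - 1/p) * (d:ℝ) ^ ((1:ℝ)/2 - 1/p) := by
    rw [div_eq_mul_one_div (d:ℝ) p, mul_comm, Real.mul_rpow (by positivity) hd0.le]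
  have hrw : (d:ℝ) ^ ((1:ℝ)/2 - 1/p) * (d:ℝ) ^ ((1:ℝ)/(2*p)) / (d:ℝ) ^ ((1:ℝ)/4)
      = (d:ℝ) ^ ((1:ℝ)/4 - 1/(2*p)) := by
    rw [← Real.rpow_add hd0, ← Real.rpow_sub hd0]
    congr 1
    field_simp
    ring
  calc C * (1/p) ^ ((1:ℝ)/2 - 1/p) * (d:ℝ) ^ ((1:ℝ)/4 - 1/(2*p))
      = ((d:ℝ)/p) ^ ((1:ℝ)/2 - 1/p) * C * (d:ℝ) ^ ((1:ℝ)/(2*p)) / (d:ℝ) ^ ((1:ℝ)/4) := by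
        rw [hsplit, ← hrw]; ring
    _ ≤ e d 2 / e d p * (d:ℝ) ^ ((1:ℝ)/(2*p)) / (d:ℝ) ^ ((1:ℝ)/4) := by
        gcongr
end

section
/- Let p ∈ (2, ∞), let r_d > 0 be a sequence with r_d/d^{1/4} bounded, and let (D_d)_{d∈ℕ} be nonempty subsets of ℝ^d with D_d ⊆ B₂^d(r_d) such that every array (θ_d)_{d∈ℕ} with θ_d ∈ D_d for all d satisfies d^{-1/2}·max(‖θ_d‖₂², ‖θ_d‖_p^p) → ∞. Then, with s̃_d := inf{‖θ‖_p : θ ∈ D_d}, one has s̃_d / d^{1/(2p)} → ∞ as d → ∞. -/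
open Filter

/-- The `p`-norm `(∑ i, |x i|^p)^(1/p)` on `ℝ^d`. -/
noncomputable def pNorm {d : ℕ} (p : ℝ) (x : EuclideanSpace ℝ (Fin d)) : ℝ :=
  (∑ i, |x i| ^ p) ^ (1 / p)

theorem pNorm_nonneg {d : ℕ} (p : ℝ) (x : EuclideanSpace ℝ (Fin d)) :
    0 ≤ pNorm p x :=
  Real.rpow_nonneg (Finset.sum_nonneg fun i _ => Real.rpow_nonneg (abs_nonneg _) p) _

/-- if `D_d ⊆ B₂^d(r_d)` are nonempty, `r_d/d^{1/4}` is bounded, and every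
array `(θ_d)` with `θ_d ∈ D_d` satisfies `d^{-1/2} max(‖θ_d‖₂², ‖θ_d‖_p^p) → ∞`, then
`s̃_d := inf{‖θ‖_p : θ ∈ D_d}` satisfies `s̃_d / d^{1/(2p)} → ∞`. -/
theorem stmt15 (p : ℝ) (hp : 2 < p)
    (r : ℕ → ℝ) (hr : ∀ d, 0 < r d)
    (hbd : ∃ C : ℝ, ∀ d : ℕ, r d / (d : ℝ) ^ ((1 : ℝ) / 4) ≤ C)
    (D : (d : ℕ) → Set (EuclideanSpace ℝ (Fin d)))
    (hne : ∀ d, (D d).Nonempty)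
    (hsub : ∀ d, D d ⊆ Metric.closedBall 0 (r d))
    (hdiv : ∀ θ : (d : ℕ) → EuclideanSpace ℝ (Fin d), (∀ d, θ d ∈ D d) →
      Tendsto (fun d : ℕ => max (‖θ d‖ ^ 2) (pNorm p (θ d) ^ p) / Real.sqrt d)
        atTop atTop) :
    Tendsto (fun d : ℕ =>
        sInf ((fun θ => pNorm p θ) '' D d) / (d : ℝ) ^ ((1 : ℝ) / (2 * p)))
      atTop atTop := by
  have hp0 : (0:ℝ) < p := by linarith
  obtain ⟨C0, hC0⟩ := hbd
  set C : ℝ := max C0 1 with hCdef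
  have hC1 : (1:ℝ) ≤ C := le_max_right _ _
  have hC : ∀ d : ℕ, r d / (d : ℝ) ^ ((1 : ℝ) / 4) ≤ C := fun d =>
    (hC0 d).trans (le_max_left _ _)
  by_contra hcon
  rw [tendsto_atTop] at hcon
  push_neg at hcon
  obtain ⟨M0, hM0⟩ := hcon
  set M : ℝ := max M0 1 with hMdef
  have hM1 : (1:ℝ) ≤ M := le_max_right _ _
  have hfreq : ∃ᶠ d : ℕ in atTop,
      sInf ((fun θ => pNorm p θ) '' D d) / (d : ℝ) ^ ((1 : ℝ) / (2 * p)) < M :=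
    hM0.mono fun d hd => lt_of_lt_of_le hd (le_max_left _ _)
  -- choose near-infimal elements
  have hchoice : ∀ d : ℕ, ∃ θ, θ ∈ D d ∧
      pNorm p θ < sInf ((fun θ => pNorm p θ) '' D d) + 1 := by
    intro d
    have hne' : ((fun θ => pNorm p θ) '' D d).Nonempty := (hne d).image _
    have hbdd : BddBelow ((fun θ => pNorm p θ) '' D d) := by
      refine ⟨0, fun y hy => ?_⟩
      obtain ⟨θ, _, rfl⟩ := hy
      exact pNorm_nonneg p θ
    have hlt : sInf ((fun θ => pNorm p θ) '' D d) <
        sInf ((fun θ => pNorm p θ) '' D d) + 1 := lt_add_one _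
    obtain ⟨y, hy, hylt⟩ := (csInf_lt_iff hbdd hne').mp hlt
    obtain ⟨θ, hθ, rfl⟩ := hy
    exact ⟨θ, hθ, hylt⟩
  choose θ hθD hθlt using hchoice
  set A : ℝ := max (C ^ 2) ((M + 1) ^ p) with hAdef
  have hev : ∀ᶠ d : ℕ in atTop,
      A + 1 ≤ max (‖θ d‖ ^ 2) (pNorm p (θ d) ^ p) / Real.sqrt d :=
    (tendsto_atTop.mp (hdiv θ hθD)) (A + 1)
  have hev1 : ∀ᶠ d : ℕ in atTop, 1 ≤ d := eventually_ge_atTop 1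
  obtain ⟨d, hSd, hKd, hd1⟩ := (hfreq.and_eventually (hev.and hev1)).exists
  -- now derive contradiction at this d
  have hdR : (1:ℝ) ≤ (d : ℝ) := by exact_mod_cast hd1
  have hdpos : (0:ℝ) < (d : ℝ) := by linarith
  have hsqrt_pos : 0 < Real.sqrt d := Real.sqrt_pos.mpr hdpos
  -- t := d ^ (1/(2p)) ≥ 1
  set t : ℝ := (d : ℝ) ^ ((1 : ℝ) / (2 * p)) with htdef
  have hexp_nonneg : (0:ℝ) ≤ 1 / (2 * p) := by positivity
  have ht1 : (1:ℝ) ≤ t := Real.one_le_rpow hdR hexp_nonneg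
  have htpos : (0:ℝ) < t := by linarith
  -- sInf bound
  have hsInf_lt : sInf ((fun θ => pNorm p θ) '' D d) < M * t := by
    have := (div_lt_iff₀ htpos).mp hSd
    linarith
  have hpN_lt : pNorm p (θ d) < (M + 1) * t := by
    have h1 := hθlt d
    have : pNorm p (θ d) < M * t + 1 := by linarith
    nlinarith
  -- p-norm bound: pNorm^p ≤ (M+1)^p * sqrt d
  have htp : t ^ p = Real.sqrt d := by
    rw [htdef, ← Real.rpow_mul (le_of_lt hdpos), Real.sqrt_eq_rpow]
    congr 1
    field_simp
  have hM1p : (0:ℝ) ≤ M + 1 := by linarith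
  have hpN_bound : pNorm p (θ d) ^ p ≤ (M + 1) ^ p * Real.sqrt d := by
    have h := Real.rpow_le_rpow (pNorm_nonneg p (θ d)) (le_of_lt hpN_lt) (le_of_lt hp0)
    rwa [Real.mul_rpow hM1p (le_of_lt htpos), htp] at h
  -- norm bound: ‖θ d‖^2 ≤ C^2 * sqrt d
  have hq_pos : (0:ℝ) < (d : ℝ) ^ ((1:ℝ)/4) := Real.rpow_pos_of_pos hdpos _
  have hr_le : r d ≤ C * (d : ℝ) ^ ((1:ℝ)/4) := by
    have := (div_le_iff₀ hq_pos).mp (hC d)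
    linarith
  have hnorm_le : ‖θ d‖ ≤ C * (d : ℝ) ^ ((1:ℝ)/4) := by
    have hmem := hsub d (hθD d)
    rw [Metric.mem_closedBall, dist_zero_right] at hmem
    linarith
  have hq_sq : ((d : ℝ) ^ ((1:ℝ)/4)) ^ 2 = Real.sqrt d := by
    rw [← Real.rpow_natCast ((d : ℝ) ^ ((1:ℝ)/4)) 2, ← Real.rpow_mul (le_of_lt hdpos),
      Real.sqrt_eq_rpow]
    norm_num
  have hnorm_bound : ‖θ d‖ ^ 2 ≤ C ^ 2 * Real.sqrt d := by
    have h := pow_le_pow_left₀ (norm_nonneg _) hnorm_le 2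
    calc ‖θ d‖ ^ 2 ≤ (C * (d : ℝ) ^ ((1:ℝ)/4)) ^ 2 := h
      _ = C ^ 2 * ((d : ℝ) ^ ((1:ℝ)/4)) ^ 2 := by ring
      _ = C ^ 2 * Real.sqrt d := by rw [hq_sq]
  -- combine
  have hmax_le : max (‖θ d‖ ^ 2) (pNorm p (θ d) ^ p) ≤ A * Real.sqrt d := by
    refine max_le ?_ ?_
    · exact hnorm_bound.trans (by
        have : C ^ 2 ≤ A := le_max_left _ _
        nlinarith [hsqrt_pos.le])
    · exact hpN_bound.trans (by
        have : (M + 1) ^ p ≤ A := le_max_right _ _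
        nlinarith [hsqrt_pos.le])
  have hfinal : max (‖θ d‖ ^ 2) (pNorm p (θ d) ^ p) / Real.sqrt d ≤ A := by
    rw [div_le_iff₀ hsqrt_pos]
    linarith
  linarith
end
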